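/- Let (X,τ) be a completely regular topological space (every point and every closed set not containing it are separated by a continuous [0,1]-valued function). Then there exist a value quantale V and a V-space (X,d) that is symmetric (d(x,y) = d(y,x) for all x, y ∈ X) such that the topology generated by (V,X,d) equals τ. -/

import Mathlib

/-!
Take for `V` the monotone maps `Finset S → [0, ∞]` with pointwise order and addition, where `S`
is the set of continuous real functions on `X`, and put `d x y F = max_{f ∈ F} |f x - f y|`.
The elements well above `⊥` are exactly those dominating a map that equals some `δ > 0` on the
subsets of a finite `F₀` and `∞` elsewhere, so up to refinement the `d`-balls about `x` are the
sets `{y | |f x - f y| < δ for all f ∈ F₀}`. These generate the initial topology of the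
continuous functions, which is the topology of `X` since `X` is completely regular.
-/

/-- `y` is well above `x` (written `y ≻ x`): for every `S` with `⨅ S ≤ x`
there is `s ∈ S` with `s ≤ y`. -/
def WellAbove {V : Type*} [CompleteLattice V] (y x : V) : Prop :=
  ∀ S : Set V, sInf S ≤ x → ∃ s ∈ S, s ≤ y

theorem WellAbove.mono {V : Type*} [CompleteLattice V] {a b x : V}
    (h : WellAbove a x) (hab : a ≤ b) : WellAbove b x := by
  intro S hS
  obtain ⟨s, hs, hsa⟩ := h S hS
  exact ⟨s, hs, hsa.trans hab⟩

/-- A complete lattice `V` together with an addition `add` is a value quantale if it is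
completely distributive (expressed via Raney's characterization `y = ⨅ {a | a ≻ y}`),
the set `{a | a ≻ ⊥}` is a filter (nonempty, upward closed, closed under binary meets),
and `add` is associative, commutative, has `⊥` as neutral element and distributes over
arbitrary infima. -/
structure IsValueQuantale (V : Type*) [CompleteLattice V] (add : V → V → V) : Prop where
  raney : ∀ y : V, y = sInf {a | WellAbove a y}
  wellAbove_bot_nonempty : ∃ a : V, WellAbove a ⊥
  wellAbove_bot_upward : ∀ a b : V, WellAbove a ⊥ → a ≤ b → WellAbove b ⊥
  wellAbove_bot_inf : ∀ a b : V, WellAbove a ⊥ → WellAbove b ⊥ → WellAbove (a ⊓ b) ⊥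
  add_assoc : ∀ a b c : V, add (add a b) c = add a (add b c)
  add_comm : ∀ a b : V, add a b = add b a
  add_bot : ∀ a : V, add a ⊥ = a
  add_sInf : ∀ (a : V) (S : Set V), add a (sInf S) = ⨅ s ∈ S, add a s

/-- A value quantale, bundled as a class. -/
class ValueQuantale (V : Type*) extends CompleteLattice V, Add V where
  isVQ : IsValueQuantale V (· + ·)

/-- `d : X → X → V` is a `V`-space distance (w.r.t. the addition `add`). -/
structure IsVSpaceOn {V : Type*} [CompleteLattice V] (add : V → V → V)
    {X : Type*} (d : X → X → V) : Prop where
  refl : ∀ x, d x x = ⊥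
  triangle : ∀ x y z, d x z ≤ add (d x y) (d y z)

/-- The open ball of radius `ε` about `x`: all `y` with `d x y ≺ ε`. -/
def ball {V X : Type*} [CompleteLattice V] (d : X → X → V) (ε : V) (x : X) : Set X :=
  {y | WellAbove ε (d x y)}

/-- `U` is open for the topology generated by a continuity space. -/
def GenOpen {V X : Type*} [CompleteLattice V] (d : X → X → V) (U : Set X) : Prop :=
  ∀ x ∈ U, ∃ ε : V, WellAbove ε ⊥ ∧ ball d ε x ⊆ U

/-- The topology generated by a continuity space `(V, X, d)`. -/
def genTop {V X : Type*} [ValueQuantale V] (d : X → X → V) : TopologicalSpace X where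
  IsOpen := GenOpen d
  isOpen_univ := fun _x _ => by
    obtain ⟨ε, hε⟩ := (ValueQuantale.isVQ (V := V)).wellAbove_bot_nonempty
    exact ⟨ε, hε, Set.subset_univ _⟩
  isOpen_inter := fun U₁ U₂ h₁ h₂ x hx => by
    obtain ⟨ε₁, hε₁, hb₁⟩ := h₁ x hx.1
    obtain ⟨ε₂, hε₂, hb₂⟩ := h₂ x hx.2
    exact ⟨ε₁ ⊓ ε₂, (ValueQuantale.isVQ (V := V)).wellAbove_bot_inf _ _ hε₁ hε₂,
      fun y hy => ⟨hb₁ (WellAbove.mono hy inf_le_left), hb₂ (WellAbove.mono hy inf_le_right)⟩⟩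
  isOpen_sUnion := fun S hS x hx => by
    obtain ⟨U, hU, hxU⟩ := hx
    obtain ⟨ε, hε, hb⟩ := hS U hU x hxU
    exact ⟨ε, hε, hb.trans (Set.subset_sUnion_of_mem hU)⟩

/-- `Ω S`: the downward-closed families of finite subsets of `S`,
ordered by reverse inclusion. -/
abbrev Omega (S : Type*) := (LowerSet (Finset S))ᵒᵈ

/-- The underlying family of finite subsets of an element of `Ω S`. -/
def Omega.carrier {S : Type*} (A : Omega S) : Set (Finset S) :=
  ((OrderDual.ofDual A : LowerSet (Finset S)) : Set (Finset S))

/-- Construct an element of `Ω S` from a downward-closed family of finite subsets. -/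
def Omega.mk {S : Type*} (A : Set (Finset S)) (h : IsLowerSet A) : Omega S :=
  OrderDual.toDual ⟨A, h⟩

/-- Addition on `Ω S`: intersection of the families. -/
def omegaAdd {S : Type*} (A B : Omega S) : Omega S :=
  Omega.mk (Omega.carrier A ∩ Omega.carrier B)
    ((OrderDual.ofDual A : LowerSet (Finset S)).lower.inter
      (OrderDual.ofDual B : LowerSet (Finset S)).lower)

open ENNReal

theorem WellAbove.le {V : Type*} [CompleteLattice V] {a y : V} (h : WellAbove a y) : y ≤ a := by
  obtain ⟨s, rfl, hs⟩ := h {y} (by simp)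
  exact hs

section ValueQuantale

variable {S : Type*}

def pointwiseAdd {α : Type*} [Preorder α] (a b : α →o ℝ≥0∞) : α →o ℝ≥0∞ :=
  ⟨a + b, a.mono.add b.mono⟩

@[simp]
theorem pointwiseAdd_apply {α : Type*} [Preorder α] (a b : α →o ℝ≥0∞) (x : α) :
    pointwiseAdd a b x = a x + b x := rfl

open Classical in
noncomputable def finsetBump (F₀ : Finset S) (c : ℝ≥0∞) : Finset S →o ℝ≥0∞ :=
  ⟨fun G => if G ⊆ F₀ then c else ⊤, fun G G' hG => by
    by_cases h' : G' ⊆ F₀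
    · simp [h', hG.trans h']
    · simp [h']⟩

theorem finsetBump_of_subset {F₀ G : Finset S} (h : G ⊆ F₀) (c : ℝ≥0∞) :
    finsetBump F₀ c G = c := if_pos h

theorem finsetBump_of_not_subset {F₀ G : Finset S} (h : ¬ G ⊆ F₀) (c : ℝ≥0∞) :
    finsetBump F₀ c G = ⊤ := if_neg h

theorem finsetBump_anti {F F' : Finset S} {c c' : ℝ≥0∞} (hF : F ⊆ F') (hc : c ≤ c') :
    finsetBump F' c ≤ finsetBump F c' := fun G => show finsetBump F' c G ≤ finsetBump F c' G by
  by_cases hG : G ⊆ F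
  · rw [finsetBump_of_subset hG, finsetBump_of_subset (hG.trans hF)]
    exact hc
  · rw [finsetBump_of_not_subset hG]
    exact le_top

theorem wellAbove_finsetBump {y : Finset S →o ℝ≥0∞} {F₀ : Finset S} {δ : ℝ≥0∞}
    (hy : y F₀ < δ) : WellAbove (finsetBump F₀ δ) y := by
  intro T hT
  have hlt : ⨅ s ∈ T, s F₀ < δ := (hT F₀).trans_lt hy
  obtain ⟨s, hs, hsδ⟩ : ∃ s ∈ T, s F₀ < δ := by simpa only [iInf_lt_iff, exists_prop] using hlt
  refine ⟨s, hs, fun G => show s G ≤ finsetBump F₀ δ G from ?_⟩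
  by_cases hG : G ⊆ F₀
  · rw [finsetBump_of_subset hG]
    exact (s.mono hG).trans hsδ.le
  · rw [finsetBump_of_not_subset hG]
    exact le_top

/-- The bumps `finsetBump F t` with `t > 0` have infimum `⊥`, so one of them lies below `a`. -/
theorem exists_finsetBump_le_of_wellAbove_bot {a : Finset S →o ℝ≥0∞} (h : WellAbove a ⊥) :
    ∃ F₀ δ, 0 < δ ∧ finsetBump F₀ δ ≤ a := by
  let T : Set (Finset S →o ℝ≥0∞) := {b | ∃ F₀ δ, 0 < δ ∧ b = finsetBump F₀ δ}
  have hT : sInf T ≤ ⊥ := fun G => by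
    refine le_of_forall_gt_imp_ge_of_dense fun t ht => ?_
    refine (iInf₂_le (finsetBump G t) ⟨G, t, ht, rfl⟩).trans ?_
    rw [finsetBump_of_subset subset_rfl]
  obtain ⟨_, ⟨F₀, δ, hδ, rfl⟩, hle⟩ := h T hT
  exact ⟨F₀, δ, hδ, hle⟩

theorem isValueQuantale_finsetOrderHom :
    IsValueQuantale (Finset S →o ℝ≥0∞) pointwiseAdd where
  raney y := by
    refine le_antisymm (le_sInf fun a ha => ha.le) fun F => ?_
    refine le_of_forall_gt_imp_ge_of_dense fun c hc => ?_
    refine (iInf₂_le (finsetBump F c) (wellAbove_finsetBump (y := y) hc)).trans ?_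
    rw [finsetBump_of_subset subset_rfl]
  wellAbove_bot_nonempty := ⟨finsetBump ∅ 1, wellAbove_finsetBump zero_lt_one⟩
  wellAbove_bot_upward _ _ := WellAbove.mono
  wellAbove_bot_inf a b ha hb := by
    classical
    obtain ⟨F₀, δa, hδa, hFa⟩ := exists_finsetBump_le_of_wellAbove_bot ha
    obtain ⟨F₁, δb, hδb, hFb⟩ := exists_finsetBump_le_of_wellAbove_bot hb
    have hle : finsetBump (F₀ ∪ F₁) (δa ⊓ δb) ≤ a ⊓ b :=
      le_inf ((finsetBump_anti Finset.subset_union_left inf_le_left).trans hFa)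
        ((finsetBump_anti Finset.subset_union_right inf_le_right).trans hFb)
    exact (wellAbove_finsetBump (lt_inf_iff.mpr ⟨hδa, hδb⟩)).mono hle
  add_assoc a b c := OrderHom.ext _ _ (funext fun _ => add_assoc _ _ _)
  add_comm a b := OrderHom.ext _ _ (funext fun _ => add_comm _ _)
  add_bot a := OrderHom.ext _ _ (funext fun _ => add_zero _)
  add_sInf a T := OrderHom.ext _ _ <| funext fun F => by
    simp only [pointwiseAdd_apply, OrderHom.sInf_apply, OrderHom.iInf_apply, ENNReal.add_iInf]

end ValueQuantale

section SupEDist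

variable {S X Y : Type*} [PseudoEMetricSpace Y]

def supEDist (f : S → X → Y) (x y : X) : Finset S →o ℝ≥0∞ :=
  ⟨fun F => F.sup fun i => edist (f i x) (f i y), fun _ _ h => Finset.sup_mono h⟩

@[simp]
theorem supEDist_apply (f : S → X → Y) (x y : X) (F : Finset S) :
    supEDist f x y F = F.sup fun i => edist (f i x) (f i y) := rfl

theorem supEDist_comm (f : S → X → Y) (x y : X) : supEDist f x y = supEDist f y x :=
  OrderHom.ext _ _ <| funext fun F => by simp only [supEDist_apply, edist_comm]

theorem isVSpaceOn_supEDist (f : S → X → Y) : IsVSpaceOn pointwiseAdd (supEDist f) where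
  refl x := OrderHom.ext _ _ <| funext fun F => by
    simp only [supEDist_apply, edist_self, ← bot_eq_zero, Finset.sup_bot]
    rfl
  triangle x y z F := Finset.sup_le fun i hi =>
    (edist_triangle _ (f i y) _).trans
      (add_le_add (Finset.le_sup (f := fun i => edist (f i x) (f i y)) hi)
        (Finset.le_sup (f := fun i => edist (f i y) (f i z)) hi))

theorem isOpen_of_genOpen_supEDist [TopologicalSpace X] {f : S → X → Y}
    (hf : ∀ i, Continuous (f i)) {U : Set X} (hU : GenOpen (supEDist f) U) : IsOpen U := by
  refine isOpen_iff_forall_mem_open.mpr fun x hx => ?_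
  obtain ⟨ε, hε, hball⟩ := hU x hx
  obtain ⟨F₀, δ, hδ, hle⟩ := exists_finsetBump_le_of_wellAbove_bot hε
  refine ⟨⋂ i ∈ F₀, {y | edist (f i x) (f i y) < δ}, fun y hy => hball ?_, ?_, ?_⟩
  · have hy : supEDist f x y F₀ < δ := by
      simpa only [supEDist_apply, Finset.sup_lt_iff hδ, Set.mem_iInter₂, Set.mem_ofPred_eq] using hy
    exact (wellAbove_finsetBump hy).mono hle
  · exact isOpen_biInter_finset fun i _ =>
      isOpen_lt (continuous_const.edist (hf i)) continuous_const
  · simpa only [Set.mem_iInter₂, Set.mem_ofPred_eq, edist_self] using fun _ _ => hδ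

theorem genOpen_supEDist_of_isOpen [TopologicalSpace X] {f : S → X → Y}
    (hsep : ∀ (U : Set X) (x : X), IsOpen U → x ∈ U →
      ∃ i, ∃ r > 0, ∀ y, edist (f i x) (f i y) < r → y ∈ U)
    {U : Set X} (hU : IsOpen U) : GenOpen (supEDist f) U := by
  intro x hx
  obtain ⟨i, r, hr, hsub⟩ := hsep U x hU hx
  obtain ⟨r', hr', hr'r⟩ := exists_between hr
  refine ⟨finsetBump {i} r', wellAbove_finsetBump hr', fun y hy => hsub y ?_⟩
  have hle : supEDist f x y {i} ≤ finsetBump {i} r' {i} := hy.le {i}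
  rw [finsetBump_of_subset subset_rfl, supEDist_apply, Finset.sup_singleton] at hle
  exact hle.trans_lt hr'r

end SupEDist

/-- every completely regular topological space is generated by a symmetric
continuity space: there are a value quantale `V` and a symmetric `V`-space distance `d`
on `X` whose generated topology is the given one. -/
theorem completelyRegular_generated_by_symmetric {X : Type u} [TopologicalSpace X]
    (hcr : ∀ (C : Set X) (x : X), IsClosed C → x ∉ C →
      ∃ f : X → ℝ, Continuous f ∧ (∀ y, f y ∈ Set.Icc (0 : ℝ) 1) ∧
        f x = 1 ∧ ∀ y ∈ C, f y = 0) :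
    ∃ (V : Type u) (_ : CompleteLattice V) (add : V → V → V) (d : X → X → V),
      IsValueQuantale V add ∧ IsVSpaceOn add d ∧ (∀ x y, d x y = d y x) ∧
      ∀ U : Set X, GenOpen d U ↔ IsOpen U := by
  have hsep : ∀ (U : Set X) (x : X), IsOpen U → x ∈ U →
      ∃ f : C(X, ℝ), ∃ r > 0, ∀ y, edist (f x) (f y) < r → y ∈ U := by
    intro U x hU hx
    obtain ⟨f, hf, -, hfx, hfU⟩ := hcr Uᶜ x hU.isClosed_compl (not_not_intro hx)
    refine ⟨⟨f, hf⟩, 1, one_pos, fun y hy => by_contra fun hyU => ?_⟩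
    simp [hfx, hfU y hyU] at hy
  exact ⟨_, inferInstance, pointwiseAdd, supEDist fun f : C(X, ℝ) => ⇑f,
    isValueQuantale_finsetOrderHom, isVSpaceOn_supEDist _, supEDist_comm _,
    fun U => ⟨isOpen_of_genOpen_supEDist fun f => f.continuous, genOpen_supEDist_of_isOpen hsep⟩⟩
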